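/- Assume P and PᵀP are irreducible and at least one coarse state contains more than one fine state. Then ‖(I − Π(μ)) J(μ)‖²_{1/μ} ≤ 1 − 1/‖(I − Π(μ)) (I − P̂*P̂)^{−1} (I − Π(μ))‖_{1/μ}. -/

import Mathlib

open Matrix BigOperators

/-- A matrix is column stochastic: nonnegative entries, each column sums to one. -/
def ColStoch {m : Type*} [Fintype m] (M : Matrix m m ℝ) : Prop :=
  (∀ i j, 0 ≤ M i j) ∧ ∀ j, ∑ i, M i j = 1

/-- Irreducibility of a matrix via its pattern of nonzero entries:
the associated directed graph is strongly connected. -/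
def Irred {m : Type*} [Fintype m] [DecidableEq m] (M : Matrix m m ℝ) : Prop :=
  ∀ i j, ∃ k : ℕ, 0 < k ∧ (M ^ k) i j ≠ 0

/-- Weighted inner product `⟨x,y⟩_w = ∑ i, x i * y i * w i`. -/
def innerW {m : Type*} [Fintype m] (w x y : m → ℝ) : ℝ := ∑ i, x i * y i * w i

/-- Weighted `ℓ²(w)` norm. -/
noncomputable def normW {m : Type*} [Fintype m] (w x : m → ℝ) : ℝ :=
  Real.sqrt (innerW w x x)

/-- Operator norm of a matrix with respect to the `ℓ²(w)` norm. -/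
noncomputable def opNormW {m : Type*} [Fintype m] (w : m → ℝ) (M : Matrix m m ℝ) : ℝ :=
  sInf {c | 0 ≤ c ∧ ∀ x, normW w (M.mulVec x) ≤ c * normW w x}

/-- Aggregation operator for the partition `{f⁻¹(i)}` of `Fin N`. -/
def Agg {N n : ℕ} (f : Fin N → Fin n) : Matrix (Fin n) (Fin N) ℝ :=
  fun i x => if f x = i then 1 else 0

/-- Disaggregation operator for the partition `{f⁻¹(i)}` and weight vector ν. -/
noncomputable def Disagg {N n : ℕ} (f : Fin N → Fin n) (ν : Fin N → ℝ) :
    Matrix (Fin N) (Fin n) ℝ :=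
  fun j i => if f j = i then ν j / (Agg f).mulVec ν i else 0

/-- Coarse approximation `C(ν) = A P D(ν)`. -/
noncomputable def CoarseC {N n : ℕ} (P : Matrix (Fin N) (Fin N) ℝ) (f : Fin N → Fin n)
    (ν : Fin N → ℝ) : Matrix (Fin n) (Fin n) ℝ := Agg f * P * Disagg f ν

/-- `P̂ = P - μ 𝟙ᵀ`. -/
def hatP {N : ℕ} (P : Matrix (Fin N) (Fin N) ℝ) (μ : Fin N → ℝ) :
    Matrix (Fin N) (Fin N) ℝ := P - vecMulVec μ 1

/-- Coarse projection `S(ν) = D(ν)[A(I-P+μ𝟙ᵀ)D(ν)]⁻¹ A(I-P+μ𝟙ᵀ)`. -/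
noncomputable def CoarseS {N n : ℕ} (P : Matrix (Fin N) (Fin N) ℝ) (f : Fin N → Fin n)
    (μ ν : Fin N → ℝ) : Matrix (Fin N) (Fin N) ℝ :=
  Disagg f ν * (Agg f * (1 - P + vecMulVec μ 1) * Disagg f ν)⁻¹ *
    (Agg f * (1 - P + vecMulVec μ 1))

/-- Orthogonal coarse projection `Π(ν) = D(ν) A`. -/
noncomputable def PiProj {N n : ℕ} (f : Fin N → Fin n) (ν : Fin N → ℝ) :
    Matrix (Fin N) (Fin N) ℝ := Disagg f ν * Agg f

/-- Error propagation operator `J(ν) = P̂ (I - S(ν))`. -/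
noncomputable def Jop {N n : ℕ} (P : Matrix (Fin N) (Fin N) ℝ) (f : Fin N → Fin n)
    (μ ν : Fin N → ℝ) : Matrix (Fin N) (Fin N) ℝ := hatP P μ * (1 - CoarseS P f μ ν)

/-- Spectrum (set of complex eigenvalues) of a real matrix. -/
noncomputable def specC {N : ℕ} (M : Matrix (Fin N) (Fin N) ℝ) : Set ℂ :=
  spectrum ℂ (M.map (Complex.ofReal))

/-- Spectral radius of a real matrix. -/
noncomputable def specRad {N : ℕ} (M : Matrix (Fin N) (Fin N) ℝ) : ℝ :=
  sSup ((fun z : ℂ => ‖z‖) '' specC M)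

/-- The `ℓ²(1/μ)`-adjoint `diag(μ) Mᵀ diag(1/μ)`. -/
noncomputable def adjW {N : ℕ} (μ : Fin N → ℝ) (M : Matrix (Fin N) (Fin N) ℝ) :
    Matrix (Fin N) (Fin N) ℝ :=
  Matrix.diagonal μ * Mᵀ * Matrix.diagonal (fun i => (μ i)⁻¹)

/-- The ε-inner product `⟨x,y⟩_ε = ⟨x,(I-Π(μ))y⟩_{1/μ} + ε ⟨x,Π(μ)y⟩_{1/μ}`. -/
noncomputable def innerEps {N n : ℕ} (f : Fin N → Fin n) (μ : Fin N → ℝ) (ε : ℝ)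
    (x y : Fin N → ℝ) : ℝ :=
  innerW (fun i => (μ i)⁻¹) x ((1 - PiProj f μ).mulVec y) +
    ε * innerW (fun i => (μ i)⁻¹) x ((PiProj f μ).mulVec y)

/-- The ε-norm. -/
noncomputable def normEps {N n : ℕ} (f : Fin N → Fin n) (μ : Fin N → ℝ) (ε : ℝ)
    (x : Fin N → ℝ) : ℝ := Real.sqrt (innerEps f μ ε x x)

/-- Operator norm induced by the ε-norm. -/
noncomputable def opNormEps {N n : ℕ} (f : Fin N → Fin n) (μ : Fin N → ℝ) (ε : ℝ)
    (M : Matrix (Fin N) (Fin N) ℝ) : ℝ :=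
  sInf {c | 0 ≤ c ∧ ∀ x, normEps f μ ε (M.mulVec x) ≤ c * normEps f μ ε x}

/-!
Write `Q = I - Π`, `R = I - P̂* P̂` and `β = ‖Q R⁻¹ Q‖`. Since `Π S = S` and
`Π (I - P̂) (I - S) = 0`, the vector `y = (I - S) x` satisfies `Q y = Q x` and `Π P̂ y = Π y`,
and two Pythagorean splittings give `‖Q J x‖² = ‖Q x‖² - ⟨y, R y⟩`. The form of `R` is positive
semidefinite, so Cauchy–Schwarz applied to `y` and `R⁻¹ Q x` gives `‖Q x‖² ≤ β ⟨y, R y⟩`;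
as `R ≤ I`, the same bound on the range of `Q` shows `β ≥ 1` unless `Q = 0`. Hence
`‖Q J x‖² ≤ (1 - 1/β) ‖Q x‖² ≤ (1 - 1/β) ‖x‖²`.

Both `R` and the coarse matrix `A (I - P̂) D` are invertible because `‖z‖ ≤ ‖P z‖` forces `z` to
be a multiple of `μ`, by irreducibility of `Pᵀ P`.
-/

open Finset

section WeightedInner

variable {m : Type*} [Fintype m] {w : m → ℝ}

lemma innerW_comm (w x y : m → ℝ) : innerW w x y = innerW w y x := by
  simp only [innerW, mul_comm (x _)]

lemma innerW_add_left (w x y z : m → ℝ) :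
    innerW w (x + y) z = innerW w x z + innerW w y z := by
  simp only [innerW, Pi.add_apply, add_mul, sum_add_distrib]

lemma innerW_sub_left (w x y z : m → ℝ) :
    innerW w (x - y) z = innerW w x z - innerW w y z := by
  simp only [innerW, Pi.sub_apply, sub_mul, sum_sub_distrib]

lemma innerW_smul_left (w : m → ℝ) (t : ℝ) (x y : m → ℝ) :
    innerW w (t • x) y = t * innerW w x y := by
  simp only [innerW, Pi.smul_apply, smul_eq_mul, mul_sum, mul_assoc]

lemma innerW_add_right (w x y z : m → ℝ) :
    innerW w x (y + z) = innerW w x y + innerW w x z := by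
  rw [innerW_comm, innerW_add_left, innerW_comm w y, innerW_comm w z]

lemma innerW_sub_right (w x y z : m → ℝ) :
    innerW w x (y - z) = innerW w x y - innerW w x z := by
  rw [innerW_comm, innerW_sub_left, innerW_comm w y, innerW_comm w z]

lemma innerW_smul_right (w : m → ℝ) (t : ℝ) (x y : m → ℝ) :
    innerW w x (t • y) = t * innerW w x y := by
  rw [innerW_comm, innerW_smul_left, innerW_comm]

lemma innerW_self_nonneg (hw : ∀ i, 0 ≤ w i) (x : m → ℝ) : 0 ≤ innerW w x x :=
  sum_nonneg fun i _ => mul_nonneg (mul_self_nonneg (x i)) (hw i)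

lemma innerW_self_eq_zero (hw : ∀ i, 0 < w i) {x : m → ℝ} : innerW w x x = 0 ↔ x = 0 := by
  refine ⟨fun h => funext fun i => ?_, fun h => by simp [h, innerW]⟩
  have := (sum_eq_zero_iff_of_nonneg fun j _ =>
    mul_nonneg (mul_self_nonneg (x j)) (hw j).le).1 h i (mem_univ i)
  simpa [(hw i).ne'] using this

lemma innerW_self_pos (hw : ∀ i, 0 < w i) {x : m → ℝ} (hx : x ≠ 0) : 0 < innerW w x x :=
  (innerW_self_nonneg (fun i => (hw i).le) x).lt_of_ne' (mt (innerW_self_eq_zero hw).1 hx)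

lemma innerW_sq_le (hw : ∀ i, 0 ≤ w i) (x y : m → ℝ) :
    innerW w x y ^ 2 ≤ innerW w x x * innerW w y y :=
  sum_sq_le_sum_mul_sum_of_sq_le_mul _ (fun i _ => mul_nonneg (mul_self_nonneg _) (hw i))
    (fun i _ => mul_nonneg (mul_self_nonneg _) (hw i)) fun i _ => le_of_eq (by ring)

lemma innerW_le_normW_mul_normW (hw : ∀ i, 0 ≤ w i) (x y : m → ℝ) :
    innerW w x y ≤ normW w x * normW w y := by
  rw [normW, normW, ← Real.sqrt_mul (innerW_self_nonneg hw x)]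
  exact Real.le_sqrt_of_sq_le (innerW_sq_le hw x y)

lemma innerW_sub_sub (w x y : m → ℝ) :
    innerW w (x - y) (x - y) = innerW w x x - 2 * innerW w x y + innerW w y y := by
  rw [innerW_sub_left, innerW_sub_right, innerW_sub_right, innerW_comm w y x]
  ring

lemma sq_normW (hw : ∀ i, 0 ≤ w i) (x : m → ℝ) : normW w x ^ 2 = innerW w x x :=
  Real.sq_sqrt (innerW_self_nonneg hw x)

lemma normW_le_sqrt_mul {c : ℝ} (hc : 0 ≤ c) {x y : m → ℝ}
    (h : innerW w x x ≤ c * innerW w y y) : normW w x ≤ √c * normW w y := by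
  rw [normW, normW, ← Real.sqrt_mul hc]
  exact Real.sqrt_le_sqrt h

end WeightedInner

section OperatorNorm

variable {m : Type*} [Fintype m] {w : m → ℝ}

lemma opNormW_nonneg (w : m → ℝ) (M : Matrix m m ℝ) : 0 ≤ opNormW w M :=
  Real.sInf_nonneg fun _ hc => hc.1

lemma opNormW_le {M : Matrix m m ℝ} {c : ℝ} (hc : 0 ≤ c)
    (h : ∀ x, normW w (M *ᵥ x) ≤ c * normW w x) : opNormW w M ≤ c :=
  csInf_le ⟨0, fun _ hd => hd.1⟩ ⟨hc, h⟩

lemma opNormW_zero (w : m → ℝ) : opNormW w (0 : Matrix m m ℝ) = 0 :=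
  le_antisymm (opNormW_le le_rfl fun x => by simp [normW, innerW]) (opNormW_nonneg w 0)

lemma innerW_mulVec_self_le_sum_sq (hw : ∀ i, 0 < w i) (M : Matrix m m ℝ) (x : m → ℝ) :
    innerW w (M *ᵥ x) (M *ᵥ x) ≤ (∑ i, w i * ∑ j, M i j ^ 2 / w j) * innerW w x x := by
  rw [innerW, sum_mul]
  refine sum_le_sum fun i _ => ?_
  have hrow : (M *ᵥ x) i ^ 2 ≤ (∑ j, M i j ^ 2 / w j) * innerW w x x :=
    sum_sq_le_sum_mul_sum_of_sq_le_mul _ (fun j _ => div_nonneg (sq_nonneg _) (hw j).le)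
      (fun j _ => mul_nonneg (mul_self_nonneg _) (hw j).le)
      fun j _ => le_of_eq (by field_simp [(hw j).ne'])
  nlinarith [hw i]

lemma normW_mulVec_le_opNormW (hw : ∀ i, 0 < w i) (M : Matrix m m ℝ) (x : m → ℝ) :
    normW w (M *ᵥ x) ≤ opNormW w M * normW w x := by
  have hC : 0 ≤ ∑ i, w i * ∑ j, M i j ^ 2 / w j := sum_nonneg fun i _ =>
    mul_nonneg (hw i).le (sum_nonneg fun j _ => div_nonneg (sq_nonneg _) (hw j).le)
  have hbdd : ({c | 0 ≤ c ∧ ∀ x, normW w (M *ᵥ x) ≤ c * normW w x} : Set ℝ).Nonempty :=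
    ⟨_, Real.sqrt_nonneg _, fun x => normW_le_sqrt_mul hC (innerW_mulVec_self_le_sum_sq hw M x)⟩
  obtain hx | hx := eq_or_lt_of_le (show 0 ≤ normW w x from Real.sqrt_nonneg _)
  · obtain ⟨c, -, hc⟩ := hbdd
    simpa only [← hx, mul_zero] using hc x
  · rw [← div_le_iff₀ hx]
    exact le_csInf hbdd fun c hc => (div_le_iff₀ hx).2 (hc.2 x)

lemma innerW_mulVec_le_opNormW_mul (hw : ∀ i, 0 < w i) (M : Matrix m m ℝ) (x : m → ℝ) :
    innerW w x (M *ᵥ x) ≤ opNormW w M * innerW w x x := by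
  have hw' : ∀ i, 0 ≤ w i := fun i => (hw i).le
  calc innerW w x (M *ᵥ x) ≤ normW w x * normW w (M *ᵥ x) := innerW_le_normW_mul_normW hw' _ _
    _ ≤ normW w x * (opNormW w M * normW w x) :=
        mul_le_mul_of_nonneg_left (normW_mulVec_le_opNormW hw M x) (Real.sqrt_nonneg _)
    _ = opNormW w M * innerW w x x := by rw [← sq_normW hw' x]; ring

lemma sq_opNormW_le {M : Matrix m m ℝ} {c : ℝ} (hc : 0 ≤ c)
    (h : ∀ x, innerW w (M *ᵥ x) (M *ᵥ x) ≤ c * innerW w x x) : opNormW w M ^ 2 ≤ c :=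
  calc opNormW w M ^ 2 ≤ √c ^ 2 := pow_le_pow_left₀ (opNormW_nonneg w M)
        (opNormW_le (Real.sqrt_nonneg c) fun x => normW_le_sqrt_mul hc (h x)) 2
    _ = c := Real.sq_sqrt hc

end OperatorNorm

section SelfAdjoint

variable {m : Type*} [Fintype m] {w : m → ℝ}

def IsSelfAdjointW (w : m → ℝ) (M : Matrix m m ℝ) : Prop :=
  ∀ x y, innerW w (M *ᵥ x) y = innerW w x (M *ᵥ y)

lemma isSelfAdjointW_of_apply {M : Matrix m m ℝ} (h : ∀ i j, w i * M i j = w j * M j i) :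
    IsSelfAdjointW w M := fun x y => by
  simp only [innerW, mulVec, dotProduct, sum_mul, mul_sum]
  rw [sum_comm]
  exact sum_congr rfl fun i _ => sum_congr rfl fun j _ => by linear_combination (x i * y j) * h j i

lemma IsSelfAdjointW.innerW_mulVec_self_of_idem {M : Matrix m m ℝ} (hM : IsSelfAdjointW w M)
    (hMM : M * M = M) (x : m → ℝ) : innerW w (M *ᵥ x) (M *ᵥ x) = innerW w x (M *ᵥ x) := by
  rw [hM, mulVec_mulVec, hMM]

lemma IsSelfAdjointW.innerW_mulVec_sq_le {R : Matrix m m ℝ} (hR : IsSelfAdjointW w R)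
    (hRpos : ∀ x, 0 ≤ innerW w x (R *ᵥ x)) (x y : m → ℝ) :
    innerW w x (R *ᵥ y) ^ 2 ≤ innerW w x (R *ᵥ x) * innerW w y (R *ᵥ y) := by
  have hquad : ∀ s : ℝ, 0 ≤ innerW w y (R *ᵥ y) * (s * s)
      + 2 * innerW w x (R *ᵥ y) * s + innerW w x (R *ᵥ x) := fun s => by
    have h := hRpos (x + s • y)
    rw [mulVec_add, mulVec_smul, innerW_add_left, innerW_add_right, innerW_add_right,
      innerW_smul_left, innerW_smul_right, innerW_smul_left, innerW_smul_right, ← hR y x,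
      innerW_comm w (R *ᵥ y)] at h
    linarith
  have := discrim_le_zero hquad
  rw [discrim] at this
  linarith

lemma IsSelfAdjointW.mulVec_eq_zero_of_innerW_eq_zero (hw : ∀ i, 0 < w i)
    {R : Matrix m m ℝ} (hR : IsSelfAdjointW w R) (hRpos : ∀ x, 0 ≤ innerW w x (R *ᵥ x))
    {x : m → ℝ} (hx : innerW w x (R *ᵥ x) = 0) : R *ᵥ x = 0 := by
  have h := hR.innerW_mulVec_sq_le hRpos (R *ᵥ x) x
  rw [hx, mul_zero] at h
  exact (innerW_self_eq_zero hw).1 (pow_eq_zero_iff two_ne_zero |>.1 (le_antisymm h (sq_nonneg _)))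

variable [DecidableEq m]

lemma IsSelfAdjointW.one_sub {M : Matrix m m ℝ} (hM : IsSelfAdjointW w M) :
    IsSelfAdjointW w (1 - M) := fun x y => by
  simp only [sub_mulVec, one_mulVec, innerW_sub_left, innerW_sub_right, hM x y]

lemma one_sub_mul_one_sub_of_idem {M : Matrix m m ℝ} (hM : M * M = M) :
    (1 - M) * (1 - M) = 1 - M := by
  rw [sub_mul, mul_sub, mul_sub, hM]; simp

lemma IsSelfAdjointW.innerW_self_eq_add_of_idem {M : Matrix m m ℝ} (hM : IsSelfAdjointW w M)
    (hMM : M * M = M) (x : m → ℝ) :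
    innerW w x x = innerW w (M *ᵥ x) (M *ᵥ x) + innerW w ((1 - M) *ᵥ x) ((1 - M) *ᵥ x) := by
  rw [sub_mulVec, one_mulVec, innerW_sub_sub, hM.innerW_mulVec_self_of_idem hMM x]
  ring

lemma IsSelfAdjointW.innerW_mulVec_self_le_of_idem (hw : ∀ i, 0 ≤ w i) {M : Matrix m m ℝ}
    (hM : IsSelfAdjointW w M) (hMM : M * M = M) (x : m → ℝ) :
    innerW w (M *ᵥ x) (M *ᵥ x) ≤ innerW w x x := by
  rw [hM.innerW_self_eq_add_of_idem hMM x]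
  linarith [innerW_self_nonneg hw ((1 - M) *ᵥ x)]

/-- With `u = R⁻¹ Q y`, Cauchy–Schwarz for the form of `R` gives
`⟨Qy, Qy⟩² = ⟨y, R u⟩² ≤ ⟨y, R y⟩ ⟨u, R u⟩ = ⟨y, R y⟩ ⟨Qy, Q R⁻¹ Q (Qy)⟩`. -/
lemma innerW_proj_le_opNormW_mul (hw : ∀ i, 0 < w i) {Q R : Matrix m m ℝ}
    (hQ : IsSelfAdjointW w Q) (hQQ : Q * Q = Q) (hR : IsSelfAdjointW w R)
    (hRpos : ∀ x, 0 ≤ innerW w x (R *ᵥ x)) (hRdet : IsUnit R.det) (y : m → ℝ) :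
    innerW w (Q *ᵥ y) (Q *ᵥ y) ≤ opNormW w (Q * R⁻¹ * Q) * innerW w y (R *ᵥ y) := by
  set q := Q *ᵥ y
  set u := R⁻¹ *ᵥ q
  have hRu : R *ᵥ u = q := by rw [mulVec_mulVec, mul_nonsing_inv _ hRdet, one_mulVec]
  have hQq : Q *ᵥ q = q := by rw [mulVec_mulVec, hQQ]
  have hyu : innerW w y (R *ᵥ u) = innerW w q q := by
    rw [hRu, ← hQq, ← hQ, hQq]
  have huu : innerW w u (R *ᵥ u) = innerW w q ((Q * R⁻¹ * Q) *ᵥ q) := by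
    rw [hRu, ← hQq, ← hQ, innerW_comm, ← mulVec_mulVec, ← mulVec_mulVec, hQq, hQq]
  have hCS := hR.innerW_mulVec_sq_le hRpos y u
  rw [hyu, huu] at hCS
  have hqq := innerW_self_nonneg (fun i => (hw i).le) q
  have hβ := innerW_mulVec_le_opNormW_mul hw (Q * R⁻¹ * Q) q
  obtain hq0 | hq0 := hqq.eq_or_lt
  · rw [← hq0]
    exact mul_nonneg (opNormW_nonneg w _) (hRpos y)
  · refine le_of_mul_le_mul_right ?_ hq0
    nlinarith [hRpos y]

lemma one_le_opNormW_of_ne_zero (hw : ∀ i, 0 < w i) {Q R : Matrix m m ℝ}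
    (hQ : IsSelfAdjointW w Q) (hQQ : Q * Q = Q) (hQ0 : Q ≠ 0) (hR : IsSelfAdjointW w R)
    (hRpos : ∀ x, 0 ≤ innerW w x (R *ᵥ x)) (hRle : ∀ x, innerW w x (R *ᵥ x) ≤ innerW w x x)
    (hRdet : IsUnit R.det) : 1 ≤ opNormW w (Q * R⁻¹ * Q) := by
  obtain ⟨x, hx⟩ : ∃ x, Q *ᵥ x ≠ 0 := by
    by_contra! h
    exact hQ0 (ext_of_mulVec_single fun i => by rw [h, zero_mulVec])
  have hQx : Q *ᵥ (Q *ᵥ x) = Q *ᵥ x := by rw [mulVec_mulVec, hQQ]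
  have h := innerW_proj_le_opNormW_mul hw hQ hQQ hR hRpos hRdet (Q *ᵥ x)
  rw [hQx] at h
  have hpos := innerW_self_pos hw hx
  nlinarith [hRle (Q *ᵥ x), opNormW_nonneg w (Q * R⁻¹ * Q)]

end SelfAdjoint

namespace Matrix

lemma IsIrreducible.of_pos_iff {m : Type*} {A B : Matrix m m ℝ} (hA : A.IsIrreducible)
    (hB : ∀ i j, 0 ≤ B i j) (h : ∀ i j, 0 < A i j ↔ 0 < B i j) : B.IsIrreducible := by
  have hquiver : A.toQuiver = B.toQuiver := by
    simp only [toQuiver, h]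
  exact ⟨hB, hquiver ▸ hA.connected⟩

variable {m : Type*} [Fintype m] [DecidableEq m] {A : Matrix m m ℝ}

lemma isIrreducible_of_irred (hA : ∀ i j, 0 ≤ A i j) (h : Irred A) : A.IsIrreducible :=
  (isIrreducible_iff_exists_pow_pos hA).2 fun i j =>
    (h i j).imp fun k ⟨hk, hne⟩ => ⟨hk, (pow_apply_nonneg hA k i j).lt_of_ne' hne⟩

/-- `0 = y k = ∑ l, (A ^ p) k l * y l` forces `y j = 0` once `(A ^ p) k j > 0`. -/
lemma IsIrreducible.eq_zero_of_mulVec_eq_self (hA : A.IsIrreducible) {y : m → ℝ}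
    (hy : ∀ i, 0 ≤ y i) (hAy : A *ᵥ y = y) {k : m} (hk : y k = 0) : y = 0 := by
  have hfix : ∀ p : ℕ, (A ^ p) *ᵥ y = y := fun p => by
    induction p with
    | zero => simp
    | succ p ih => rw [pow_succ, ← mulVec_mulVec, hAy, ih]
  funext j
  obtain ⟨p, -, hpos⟩ := (isIrreducible_iff_exists_pow_pos hA.nonneg).1 hA k j
  have hsum : ∑ l, (A ^ p) k l * y l = 0 := by
    rw [← hk, ← congrFun (hfix p) k]; rfl
  have hterm := (sum_eq_zero_iff_of_nonneg fun l _ =>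
    mul_nonneg (pow_apply_nonneg hA.nonneg p k l) (hy l)).1 hsum j (mem_univ j)
  exact (mul_eq_zero.1 hterm).resolve_left hpos.ne'

lemma IsIrreducible.exists_smul_eq_of_mulVec_eq_self (hA : A.IsIrreducible) {μ : m → ℝ}
    (hμ : ∀ i, 0 < μ i) (hAμ : A *ᵥ μ = μ) {z : m → ℝ} (hz : A *ᵥ z = z) :
    ∃ t : ℝ, z = t • μ := by
  cases isEmpty_or_nonempty m
  · exact ⟨0, Subsingleton.elim _ _⟩
  obtain ⟨k, -, hk⟩ := exists_max_image univ (fun i => z i / μ i) univ_nonempty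
  refine ⟨z k / μ k, (sub_eq_zero.1 (hA.eq_zero_of_mulVec_eq_self (k := k) ?_ ?_ ?_)).symm⟩
  · intro i
    have := (div_le_iff₀ (hμ i)).1 (hk i (mem_univ i))
    simp only [Pi.sub_apply, Pi.smul_apply, smul_eq_mul]
    linarith
  · rw [mulVec_sub, mulVec_smul, hAμ, hz]
  · simp [div_mul_cancel₀ _ (hμ k).ne']

end Matrix

section Markov

variable {N : ℕ} {P : Matrix (Fin N) (Fin N) ℝ} {μ : Fin N → ℝ}

local notation "⟪" x ", " y "⟫" => innerW (fun i => (μ i)⁻¹) x y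

lemma adjW_apply (μ : Fin N → ℝ) (M : Matrix (Fin N) (Fin N) ℝ) (i j : Fin N) :
    adjW μ M i j = μ i * M j i * (μ j)⁻¹ := by
  simp [adjW, mul_diagonal, diagonal_mul]

lemma innerW_adjW_mulVec (hμ : ∀ i, 0 < μ i) (M : Matrix (Fin N) (Fin N) ℝ)
    (x y : Fin N → ℝ) : ⟪adjW μ M *ᵥ x, y⟫ = ⟪x, M *ᵥ y⟫ := by
  simp only [innerW, mulVec, dotProduct, adjW_apply, sum_mul, mul_sum]
  rw [sum_comm]
  refine sum_congr rfl fun i _ => sum_congr rfl fun j _ => ?_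
  field_simp [(hμ i).ne', (hμ j).ne']

lemma innerW_one_sub_adjW_mul_self_mulVec (hμ : ∀ i, 0 < μ i) (T : Matrix (Fin N) (Fin N) ℝ)
    (x y : Fin N → ℝ) : ⟪x, (1 - adjW μ T * T) *ᵥ y⟫ = ⟪x, y⟫ - ⟪T *ᵥ x, T *ᵥ y⟫ := by
  rw [sub_mulVec, one_mulVec, innerW_sub_right, ← mulVec_mulVec,
    innerW_comm _ x (adjW μ T *ᵥ _), innerW_adjW_mulVec hμ, innerW_comm _ (T *ᵥ y)]

lemma isSelfAdjointW_one_sub_adjW_mul_self (hμ : ∀ i, 0 < μ i)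
    (T : Matrix (Fin N) (Fin N) ℝ) : IsSelfAdjointW (fun i => (μ i)⁻¹) (1 - adjW μ T * T) :=
  fun x y => by
    rw [innerW_comm, innerW_one_sub_adjW_mul_self_mulVec hμ,
      innerW_one_sub_adjW_mul_self_mulVec hμ, innerW_comm _ y, innerW_comm _ (T *ᵥ y)]

lemma innerW_one_sub_adjW_mul_self_le (hμ : ∀ i, 0 < μ i) (T : Matrix (Fin N) (Fin N) ℝ)
    (x : Fin N → ℝ) : ⟪x, (1 - adjW μ T * T) *ᵥ x⟫ ≤ ⟪x, x⟫ := by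
  rw [innerW_one_sub_adjW_mul_self_mulVec hμ]
  linarith [innerW_self_nonneg (fun i => (inv_pos.2 (hμ i)).le) (T *ᵥ x)]

lemma innerW_inv_self_eq_sum (hμ : ∀ i, 0 < μ i) (x : Fin N → ℝ) : ⟪x, μ⟫ = ∑ i, x i :=
  sum_congr rfl fun i _ => by rw [mul_assoc, mul_inv_cancel₀ (hμ i).ne', mul_one]

lemma hatP_mulVec (P : Matrix (Fin N) (Fin N) ℝ) (μ x : Fin N → ℝ) :
    hatP P μ *ᵥ x = P *ᵥ x - (∑ j, x j) • μ := by
  rw [hatP, sub_mulVec]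
  congr 1
  ext i
  simp only [mulVec, dotProduct, vecMulVec_apply, Pi.one_apply, mul_one, Pi.smul_apply,
    smul_eq_mul, ← mul_sum, mul_comm]

lemma ColStoch.sum_mulVec (hP : ColStoch P) (x : Fin N → ℝ) :
    ∑ i, (P *ᵥ x) i = ∑ j, x j := by
  simp only [mulVec, dotProduct]
  rw [sum_comm]
  exact sum_congr rfl fun j _ => by rw [← sum_mul, hP.2 j, one_mul]

lemma ColStoch.sum_hatP_mulVec (hP : ColStoch P) (hμsum : ∑ i, μ i = 1) (x : Fin N → ℝ) :
    ∑ i, (hatP P μ *ᵥ x) i = 0 := by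
  simp [hatP_mulVec, sum_sub_distrib, hP.sum_mulVec, ← mul_sum, hμsum]

/-- Cauchy–Schwarz on each row, `(P x)ᵢ² ≤ (∑ⱼ Pᵢⱼ μⱼ) (∑ⱼ Pᵢⱼ xⱼ² / μⱼ)`, where the first
factor is `μᵢ` by stationarity; the unit column sums then recover `⟪x, x⟫`. -/
lemma ColStoch.innerW_mulVec_self_le (hP : ColStoch P) (hμ : ∀ i, 0 < μ i)
    (hinv : P *ᵥ μ = μ) (x : Fin N → ℝ) : ⟪P *ᵥ x, P *ᵥ x⟫ ≤ ⟪x, x⟫ := by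
  have hrow : ∀ i, (P *ᵥ x) i ^ 2 ≤ μ i * ∑ j, P i j * (x j ^ 2 / μ j) := fun i => by
    have h := sum_sq_le_sum_mul_sum_of_sq_le_mul univ (r := fun j => P i j * x j)
      (f := fun j => P i j * μ j) (g := fun j => P i j * (x j ^ 2 / μ j))
      (fun j _ => mul_nonneg (hP.1 i j) (hμ j).le)
      (fun j _ => mul_nonneg (hP.1 i j) (div_nonneg (sq_nonneg _) (hμ j).le))
      fun j _ => le_of_eq (by field_simp [(hμ j).ne'])
    rwa [show ∑ j, P i j * μ j = μ i from congrFun hinv i] at h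
  calc ⟪P *ᵥ x, P *ᵥ x⟫ = ∑ i, (P *ᵥ x) i ^ 2 / μ i :=
        sum_congr rfl fun i _ => by rw [div_eq_mul_inv, sq]
    _ ≤ ∑ i, ∑ j, P i j * (x j ^ 2 / μ j) :=
        sum_le_sum fun i _ => (div_le_iff₀' (hμ i)).2 (hrow i)
    _ = ⟪x, x⟫ := by
        rw [sum_comm]
        exact sum_congr rfl fun j _ => by rw [← sum_mul, hP.2 j]; ring

lemma ColStoch.innerW_hatP_mulVec_self_le (hP : ColStoch P) (hμ : ∀ i, 0 < μ i)
    (hμsum : ∑ i, μ i = 1) (hinv : P *ᵥ μ = μ) (x : Fin N → ℝ) :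
    ⟪hatP P μ *ᵥ x, hatP P μ *ᵥ x⟫ ≤ ⟪x, x⟫ - (∑ j, x j) ^ 2 := by
  have hshift : hatP P μ *ᵥ x = P *ᵥ (x - (∑ j, x j) • μ) := by
    rw [mulVec_sub, mulVec_smul, hinv, hatP_mulVec]
  have hμμ : ⟪μ, μ⟫ = 1 := by rw [innerW_inv_self_eq_sum hμ, hμsum]
  have hnorm : ⟪x - (∑ j, x j) • μ, x - (∑ j, x j) • μ⟫ = ⟪x, x⟫ - (∑ j, x j) ^ 2 := by
    rw [innerW_sub_sub, innerW_smul_right, innerW_smul_left, innerW_smul_right,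
      innerW_inv_self_eq_sum hμ, hμμ]
    ring
  rw [hshift, ← hnorm]
  exact hP.innerW_mulVec_self_le hμ hinv _

lemma ColStoch.adjW_mul_self_mulVec (hP : ColStoch P) (hμ : ∀ i, 0 < μ i)
    (hinv : P *ᵥ μ = μ) : (adjW μ P * P) *ᵥ μ = μ := by
  rw [← mulVec_mulVec, hinv]
  ext i
  simp only [mulVec, dotProduct, adjW_apply]
  calc ∑ j, μ i * P j i * (μ j)⁻¹ * μ j = μ i * ∑ j, P j i :=
        by rw [mul_sum]; exact sum_congr rfl fun j _ => by field_simp [(hμ j).ne']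
    _ = μ i := by rw [hP.2 i, mul_one]

lemma ColStoch.isIrreducible_adjW_mul_self (hP : ColStoch P) (hμ : ∀ i, 0 < μ i)
    (hirr : Irred (Pᵀ * P)) : (adjW μ P * P).IsIrreducible := by
  have hnn : ∀ i j k, 0 ≤ Pᵀ i k * P k j := fun i j k => mul_nonneg (hP.1 k i) (hP.1 k j)
  have hPtP : ∀ i j, 0 ≤ (Pᵀ * P) i j := fun i j => by
    rw [mul_apply]; exact sum_nonneg fun k _ => hnn i j k
  have hentry : ∀ i j, (adjW μ P * P) i j = ∑ k, μ i * (μ k)⁻¹ * (Pᵀ i k * P k j) :=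
    fun i j => by
      simp only [mul_apply, adjW_apply, transpose_apply]
      exact sum_congr rfl fun k _ => by ring
  have hfac : ∀ i k, 0 < μ i * (μ k)⁻¹ := fun i k => mul_pos (hμ i) (inv_pos.2 (hμ k))
  refine (isIrreducible_of_irred hPtP hirr).of_pos_iff (fun i j => ?_) fun i j => ?_
  · rw [hentry]
    exact sum_nonneg fun k _ => mul_nonneg (hfac i k).le (hnn i j k)
  · rw [hentry, mul_apply, sum_pos_iff_of_nonneg fun k _ => hnn i j k,
      sum_pos_iff_of_nonneg fun k _ => mul_nonneg (hfac i k).le (hnn i j k)]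
    exact exists_congr fun k => and_congr_right' (mul_pos_iff_of_pos_left (hfac i k)).symm

/-- The hypothesis says `⟪z, (I - P* P) z⟫ ≤ 0`; as `I - P* P` is positive semidefinite this forces
`P* P z = z`, and the irreducible matrix `P* P` fixes only the multiples of its positive fixed
vector `μ`. -/
lemma ColStoch.exists_smul_eq_of_innerW_le (hP : ColStoch P) (hirr : Irred (Pᵀ * P))
    (hμ : ∀ i, 0 < μ i) (hinv : P *ᵥ μ = μ) {z : Fin N → ℝ} (hz : ⟪z, z⟫ ≤ ⟪P *ᵥ z, P *ᵥ z⟫) :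
    ∃ t : ℝ, z = t • μ := by
  have hRpos : ∀ x, 0 ≤ ⟪x, (1 - adjW μ P * P) *ᵥ x⟫ := fun x => by
    rw [innerW_one_sub_adjW_mul_self_mulVec hμ]
    linarith [hP.innerW_mulVec_self_le hμ hinv x]
  have hRz := (isSelfAdjointW_one_sub_adjW_mul_self hμ P).mulVec_eq_zero_of_innerW_eq_zero
    (fun i => inv_pos.2 (hμ i)) hRpos (le_antisymm (by
      rw [innerW_one_sub_adjW_mul_self_mulVec hμ]; linarith) (hRpos z))
  rw [sub_mulVec, one_mulVec, sub_eq_zero] at hRz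
  exact (hP.isIrreducible_adjW_mul_self hμ hirr).exists_smul_eq_of_mulVec_eq_self hμ
    (hP.adjW_mul_self_mulVec hμ hinv) hRz.symm

lemma ColStoch.eq_zero_of_innerW_le (hP : ColStoch P) (hirr : Irred (Pᵀ * P))
    (hμ : ∀ i, 0 < μ i) (hμsum : ∑ i, μ i = 1) (hinv : P *ᵥ μ = μ) {z : Fin N → ℝ}
    (hsum : ∑ i, z i = 0) (hz : ⟪z, z⟫ ≤ ⟪P *ᵥ z, P *ᵥ z⟫) : z = 0 := by
  obtain ⟨t, rfl⟩ := hP.exists_smul_eq_of_innerW_le hirr hμ hinv hz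
  simp only [Pi.smul_apply, smul_eq_mul, ← mul_sum, hμsum, mul_one] at hsum
  simp [hsum]

lemma ColStoch.innerW_one_sub_adjW_hatP_mul_nonneg (hP : ColStoch P) (hμ : ∀ i, 0 < μ i)
    (hμsum : ∑ i, μ i = 1) (hinv : P *ᵥ μ = μ) (x : Fin N → ℝ) :
    0 ≤ ⟪x, (1 - adjW μ (hatP P μ) * hatP P μ) *ᵥ x⟫ := by
  rw [innerW_one_sub_adjW_mul_self_mulVec hμ]
  nlinarith [hP.innerW_hatP_mulVec_self_le hμ hμsum hinv x]

lemma ColStoch.isUnit_det_one_sub_adjW_hatP_mul (hP : ColStoch P) (hirr : Irred (Pᵀ * P))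
    (hμ : ∀ i, 0 < μ i) (hμsum : ∑ i, μ i = 1) (hinv : P *ᵥ μ = μ) :
    IsUnit (1 - adjW μ (hatP P μ) * hatP P μ).det := by
  rw [isUnit_iff_ne_zero]
  intro hdet
  obtain ⟨x, hx0, hx⟩ := exists_mulVec_eq_zero_iff.2 hdet
  have h0 : ⟪x, (1 - adjW μ (hatP P μ) * hatP P μ) *ᵥ x⟫ = 0 := by simp [hx, innerW]
  rw [innerW_one_sub_adjW_mul_self_mulVec hμ] at h0
  have hcontr := hP.innerW_hatP_mulVec_self_le hμ hμsum hinv x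
  have hsum : ∑ j, x j = 0 := by nlinarith
  have hPx : hatP P μ *ᵥ x = P *ᵥ x := by rw [hatP_mulVec, hsum, zero_smul, sub_zero]
  exact hx0 (hP.eq_zero_of_innerW_le hirr hμ hμsum hinv hsum (by rw [← hPx]; linarith))

end Markov

section Aggregation

variable {N n : ℕ} {f : Fin N → Fin n} {μ : Fin N → ℝ}

local notation "⟪" x ", " y "⟫" => innerW (fun i => (μ i)⁻¹) x y

lemma agg_mulVec_apply (f : Fin N → Fin n) (v : Fin N → ℝ) (c : Fin n) :
    (Agg f *ᵥ v) c = ∑ j with f j = c, v j := by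
  simp [Agg, mulVec, dotProduct, sum_filter]

lemma sum_agg_mulVec (f : Fin N → Fin n) (v : Fin N → ℝ) :
    ∑ c, (Agg f *ᵥ v) c = ∑ j, v j := by
  simp only [agg_mulVec_apply, sum_filter]
  rw [sum_comm]
  simp

lemma agg_mulVec_pos (hf : Function.Surjective f) (hμ : ∀ i, 0 < μ i) (c : Fin n) :
    0 < (Agg f *ᵥ μ) c := by
  obtain ⟨j, rfl⟩ := hf c
  rw [agg_mulVec_apply]
  exact sum_pos (fun i _ => hμ i) ⟨j, by simp⟩

lemma agg_mul_disagg (hf : Function.Surjective f) (hμ : ∀ i, 0 < μ i) :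
    Agg f * Disagg f μ = 1 := by
  ext c d
  rw [mul_apply, one_apply]
  split_ifs with hcd
  · subst hcd
    rw [← div_self (agg_mulVec_pos hf hμ c).ne']
    nth_rewrite 1 [agg_mulVec_apply]
    rw [sum_filter, sum_div]
    refine sum_congr rfl fun j _ => ?_
    by_cases h : f j = c
    · simp only [Agg, Disagg, h, if_true, one_mul]
    · simp only [Agg, Disagg, h, if_false, zero_mul, zero_div]
  · exact sum_eq_zero fun j _ => by
      by_cases h : f j = c <;> simp [Agg, Disagg, h, hcd]

lemma piProj_apply (f : Fin N → Fin n) (μ : Fin N → ℝ) (j k : Fin N) :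
    PiProj f μ j k = if f j = f k then μ j / (Agg f *ᵥ μ) (f j) else 0 := by
  simp [PiProj, mul_apply, Agg, Disagg, eq_comm]
  split_ifs with h <;> simp [h]

lemma piProj_mul_disagg (hf : Function.Surjective f) (hμ : ∀ i, 0 < μ i) :
    PiProj f μ * Disagg f μ = Disagg f μ := by
  rw [PiProj, Matrix.mul_assoc, agg_mul_disagg hf hμ, Matrix.mul_one]

lemma piProj_mul_self (hf : Function.Surjective f) (hμ : ∀ i, 0 < μ i) :
    PiProj f μ * PiProj f μ = PiProj f μ := by
  nth_rewrite 2 [PiProj]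
  rw [← Matrix.mul_assoc, piProj_mul_disagg hf hμ, PiProj]

lemma isSelfAdjointW_piProj (hμ : ∀ i, 0 < μ i) :
    IsSelfAdjointW (fun i => (μ i)⁻¹) (PiProj f μ) :=
  isSelfAdjointW_of_apply fun j k => by
    rw [piProj_apply, piProj_apply]
    by_cases h : f j = f k
    · simp only [h, if_true]
      field_simp [(hμ j).ne', (hμ k).ne']
    · simp [h, Ne.symm h]

lemma one_sub_hatP (P : Matrix (Fin N) (Fin N) ℝ) (μ : Fin N → ℝ) :
    1 - hatP P μ = 1 - P + vecMulVec μ 1 := by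
  rw [hatP]; abel

/-- A kernel vector `x` of `A (I - P̂) D` gives `z = D x` with `∑ z = 0` and `z = Π P z`,
so `‖z‖ ≤ ‖P z‖`, which forces `z = 0` and then `x = A z = 0`. -/
lemma ColStoch.isUnit_det_coarse {P : Matrix (Fin N) (Fin N) ℝ} (hP : ColStoch P)
    (hirr : Irred (Pᵀ * P)) (hμ : ∀ i, 0 < μ i) (hμsum : ∑ i, μ i = 1) (hinv : P *ᵥ μ = μ)
    (hf : Function.Surjective f) :
    IsUnit (Agg f * (1 - P + vecMulVec μ 1) * Disagg f μ).det := by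
  rw [isUnit_iff_ne_zero]
  intro hdet
  obtain ⟨x, hx0, hx⟩ := exists_mulVec_eq_zero_iff.2 hdet
  set z := Disagg f μ *ᵥ x
  have hAKz : Agg f *ᵥ ((1 - hatP P μ) *ᵥ z) = 0 := by
    rwa [one_sub_hatP, mulVec_mulVec, mulVec_mulVec]
  have hKz : (1 - hatP P μ) *ᵥ z = z - hatP P μ *ᵥ z := by rw [sub_mulVec, one_mulVec]
  have hsum : ∑ i, z i = 0 := by
    have h := sum_agg_mulVec f ((1 - hatP P μ) *ᵥ z)
    rw [hAKz, hKz] at h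
    simpa [sum_sub_distrib, hP.sum_hatP_mulVec hμsum] using h.symm
  have hPz : hatP P μ *ᵥ z = P *ᵥ z := by rw [hatP_mulVec, hsum, zero_smul, sub_zero]
  have hPiz : PiProj f μ *ᵥ z = z := by rw [mulVec_mulVec, piProj_mul_disagg hf hμ]
  have hz_eq : z = PiProj f μ *ᵥ (P *ᵥ z) := by
    have h : PiProj f μ *ᵥ ((1 - hatP P μ) *ᵥ z) = 0 := by
      rw [PiProj, ← mulVec_mulVec, hAKz, mulVec_zero]
    rwa [hKz, mulVec_sub, hPiz, hPz, sub_eq_zero] at h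
  have hz : z = 0 := hP.eq_zero_of_innerW_le hirr hμ hμsum hinv hsum <| by
    conv_lhs => rw [hz_eq]
    exact (isSelfAdjointW_piProj hμ).innerW_mulVec_self_le_of_idem
      (fun i => (inv_pos.2 (hμ i)).le) (piProj_mul_self hf hμ) _
  apply hx0
  rw [← one_mulVec x, ← agg_mul_disagg hf hμ, ← mulVec_mulVec]
  change Agg f *ᵥ z = 0
  rw [hz, mulVec_zero]

variable {P : Matrix (Fin N) (Fin N) ℝ}

lemma piProj_mul_coarseS (hf : Function.Surjective f) (hμ : ∀ i, 0 < μ i) :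
    PiProj f μ * CoarseS P f μ μ = CoarseS P f μ μ := by
  simp only [CoarseS, ← Matrix.mul_assoc, piProj_mul_disagg hf hμ]

lemma one_sub_piProj_mul_one_sub_coarseS (hf : Function.Surjective f) (hμ : ∀ i, 0 < μ i) :
    (1 - PiProj f μ) * (1 - CoarseS P f μ μ) = 1 - PiProj f μ := by
  rw [Matrix.mul_sub, Matrix.mul_one, Matrix.sub_mul _ _ (CoarseS P f μ μ),
    piProj_mul_coarseS hf hμ, Matrix.one_mul, sub_self, sub_zero]

lemma piProj_mul_one_sub_hatP_mul_one_sub_coarseS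
    (hE : IsUnit (Agg f * (1 - P + vecMulVec μ 1) * Disagg f μ).det) :
    PiProj f μ * ((1 - hatP P μ) * (1 - CoarseS P f μ μ)) = 0 := by
  have hAKS : Agg f * (1 - P + vecMulVec μ 1) * CoarseS P f μ μ
      = Agg f * (1 - P + vecMulVec μ 1) := by
    simp only [CoarseS, ← Matrix.mul_assoc]
    rw [mul_nonsing_inv _ hE, Matrix.one_mul]
  rw [one_sub_hatP, PiProj, Matrix.mul_assoc, ← Matrix.mul_assoc (Agg f), Matrix.mul_sub,
    Matrix.mul_one, hAKS, sub_self, Matrix.mul_zero]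

lemma innerW_one_sub_piProj_mul_jop_mulVec (hf : Function.Surjective f) (hμ : ∀ i, 0 < μ i)
    (hE : IsUnit (Agg f * (1 - P + vecMulVec μ 1) * Disagg f μ).det) (x : Fin N → ℝ) :
    ⟪((1 - PiProj f μ) * Jop P f μ μ) *ᵥ x, ((1 - PiProj f μ) * Jop P f μ μ) *ᵥ x⟫
      = ⟪(1 - PiProj f μ) *ᵥ x, (1 - PiProj f μ) *ᵥ x⟫
        - ⟪(1 - CoarseS P f μ μ) *ᵥ x,
            (1 - adjW μ (hatP P μ) * hatP P μ) *ᵥ ((1 - CoarseS P f μ μ) *ᵥ x)⟫ := by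
  set y := (1 - CoarseS P f μ μ) *ᵥ x
  have hPi := isSelfAdjointW_piProj (f := f) hμ
  have hPiPi := piProj_mul_self hf hμ
  have hJ : ((1 - PiProj f μ) * Jop P f μ μ) *ᵥ x = (1 - PiProj f μ) *ᵥ (hatP P μ *ᵥ y) := by
    simp only [Jop, mulVec_mulVec, y]
  have hQy : (1 - PiProj f μ) *ᵥ y = (1 - PiProj f μ) *ᵥ x := by
    rw [mulVec_mulVec, one_sub_piProj_mul_one_sub_coarseS hf hμ]
  have hPiy : PiProj f μ *ᵥ (hatP P μ *ᵥ y) = PiProj f μ *ᵥ y := by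
    have h : PiProj f μ *ᵥ ((1 - hatP P μ) *ᵥ y) = 0 := by
      rw [mulVec_mulVec, mulVec_mulVec, Matrix.mul_assoc,
        piProj_mul_one_sub_hatP_mul_one_sub_coarseS hE, zero_mulVec]
    rwa [sub_mulVec, one_mulVec, mulVec_sub, sub_eq_zero, eq_comm] at h
  have hsplit_Py := hPi.innerW_self_eq_add_of_idem hPiPi (hatP P μ *ᵥ y)
  have hsplit_y := hPi.innerW_self_eq_add_of_idem hPiPi y
  rw [hPiy] at hsplit_Py
  rw [hQy] at hsplit_y
  rw [hJ, innerW_one_sub_adjW_mul_self_mulVec hμ]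
  linarith

end Aggregation

theorem stmt15_general {N n : ℕ} (P : Matrix (Fin N) (Fin N) ℝ)
    (μ : Fin N → ℝ) (hP : ColStoch P) (hirr2 : Irred (Pᵀ * P))
    (hμpos : ∀ i, 0 < μ i) (hμsum : ∑ i, μ i = 1) (hinv : P.mulVec μ = μ)
    (f : Fin N → Fin n) (hf : Function.Surjective f) :
    opNormW (fun i => (μ i)⁻¹) ((1 - PiProj f μ) * Jop P f μ μ) ^ 2 ≤
      1 - 1 / opNormW (fun i => (μ i)⁻¹)
        ((1 - PiProj f μ) * (1 - adjW μ (hatP P μ) * hatP P μ)⁻¹ * (1 - PiProj f μ)) := by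
  by_cases hQ : 1 - PiProj f μ = 0
  · simp [hQ, opNormW_zero]
  have hw : ∀ i, 0 < (μ i)⁻¹ := fun i => inv_pos.2 (hμpos i)
  have hQsa := (isSelfAdjointW_piProj (f := f) hμpos).one_sub
  have hQQ := one_sub_mul_one_sub_of_idem (piProj_mul_self hf hμpos)
  have hR := isSelfAdjointW_one_sub_adjW_mul_self hμpos (hatP P μ)
  have hRpos := hP.innerW_one_sub_adjW_hatP_mul_nonneg hμpos hμsum hinv
  have hRdet := hP.isUnit_det_one_sub_adjW_hatP_mul hirr2 hμpos hμsum hinv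
  set β := opNormW (fun i => (μ i)⁻¹)
    ((1 - PiProj f μ) * (1 - adjW μ (hatP P μ) * hatP P μ)⁻¹ * (1 - PiProj f μ))
  have hβ : 1 ≤ β := one_le_opNormW_of_ne_zero hw hQsa hQQ hQ hR hRpos
    (innerW_one_sub_adjW_mul_self_le hμpos _) hRdet
  have hβ0 : 0 < β := one_pos.trans_le hβ
  have h1β : 0 ≤ 1 - 1 / β := sub_nonneg.2 ((div_le_one hβ0).2 hβ)
  refine sq_opNormW_le h1β fun x => ?_
  have hq := innerW_proj_le_opNormW_mul hw hQsa hQQ hR hRpos hRdet ((1 - CoarseS P f μ μ) *ᵥ x)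
  rw [mulVec_mulVec, one_sub_piProj_mul_one_sub_coarseS hf hμpos] at hq
  have hqx := hQsa.innerW_mulVec_self_le_of_idem (fun i => (hw i).le) hQQ x
  rw [innerW_one_sub_piProj_mul_jop_mulVec hf hμpos
    (hP.isUnit_det_coarse hirr2 hμpos hμsum hinv hf)]
  linear_combination (div_le_iff₀' hβ0).2 hq + mul_le_mul_of_nonneg_left hqx h1β

/-- `‖(I-Π(μ))J(μ)‖²_{1/μ} ≤ 1 - 1/‖(I-Π(μ))(I-P̂*P̂)⁻¹(I-Π(μ))‖_{1/μ}`. -/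
theorem stmt15 {N n : ℕ} (P : Matrix (Fin N) (Fin N) ℝ)
    (μ : Fin N → ℝ) (hP : ColStoch P) (hirr : Irred P) (hirr2 : Irred (Pᵀ * P))
    (hμpos : ∀ i, 0 < μ i) (hμsum : ∑ i, μ i = 1) (hinv : P.mulVec μ = μ)
    (f : Fin N → Fin n) (hf : Function.Surjective f)
    (hcoarse : ∃ a b : Fin N, a ≠ b ∧ f a = f b) :
    opNormW (fun i => (μ i)⁻¹) ((1 - PiProj f μ) * Jop P f μ μ) ^ 2 ≤
      1 - 1 / opNormW (fun i => (μ i)⁻¹)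
        ((1 - PiProj f μ) * (1 - adjW μ (hatP P μ) * hatP P μ)⁻¹ * (1 - PiProj f μ)) :=
  stmt15_general P μ hP hirr2 hμpos hμsum hinv f hf
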